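/- For all natural numbers n and d ≥ 1, the double sum ∑_{m=1}^{n} ∑_{j=1}^{m} j^d equals ∑_{s=0}^{d-1} A(d,s) · C(n-s+d+1, d+2). -/
import Mathlib


/-- Eulerian numbers: `eulerian d s` is the number of permutations of
`{1,...,d}` with exactly `s` descents. -/
def eulerian : ℕ → ℕ → ℕ
  | 0, 0 => 1
  | 0, _ + 1 => 0
  | d + 1, 0 => eulerian d 0
  | d + 1, s + 1 => (s + 2) * eulerian d (s + 1) + (d + 1 - (s + 1)) * eulerian d s

lemma eulerian_zero_of_le : ∀ d s : ℕ, d ≤ s → eulerian (d + 1) (s + 1) = 0 := by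
  intro d
  induction d with
  | zero => intro s hs; simp [eulerian]
  | succ e ih =>
    intro s hs
    obtain ⟨t, rfl⟩ : ∃ t, s = t + 1 := ⟨s - 1, by omega⟩
    show (t + 1 + 2) * eulerian (e + 1) (t + 1 + 1) + (e + 2 - (t + 2)) * eulerian (e + 1) (t + 1) = 0
    rw [ih (t+1) (by omega), ih t (by omega)]
    simp

lemma key_choose (x s d : ℕ) (h : s < d) :
    x * (x + s).choose d = (s + 1) * (x + s).choose (d + 1) + (d - s) * (x + s + 1).choose (d + 1) := by
  rcases lt_or_ge (x + s) d with hy | hy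
  · rw [Nat.choose_eq_zero_of_lt hy, Nat.choose_eq_zero_of_lt (by omega),
      Nat.choose_eq_zero_of_lt (by omega)]
    simp
  · rw [Nat.choose_succ_succ (x + s) d]
    have h1 : (x + s).choose (d + 1) * (d + 1) = (x + s).choose d * (x + s - d) :=
      Nat.choose_succ_right_eq _ _
    set C := (x + s).choose d with hC
    set D := (x + s).choose (d + 1) with hD
    obtain ⟨e, he⟩ : ∃ e, x + s - d = e := ⟨_, rfl⟩
    rw [he] at h1
    have h2 : x = d - s + e := by omega
    have h3 : s + 1 + (d - s) = d + 1 := by omega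
    calc x * C = (d - s) * C + C * e := by rw [h2]; ring
      _ = (d - s) * C + D * (d + 1) := by rw [h1]
      _ = (s + 1) * D + (d - s) * (C + D) := by rw [← h3]; ring

lemma worpitzky : ∀ d : ℕ, ∀ x : ℕ,
    x ^ (d + 1) = ∑ s ∈ Finset.range (d + 1), eulerian (d + 1) s * (x + s).choose (d + 1) := by
  intro d
  induction d with
  | zero => intro x; simp [eulerian]
  | succ e ih =>
    intro x
    have step : x ^ (e + 2) = ∑ s ∈ Finset.range (e + 1),
        ((s + 1) * eulerian (e + 1) s * (x + s).choose (e + 2) +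
          (e + 1 - s) * eulerian (e + 1) s * (x + s + 1).choose (e + 2)) := by
      rw [pow_succ, ih x, Finset.sum_mul]
      refine Finset.sum_congr rfl fun s hs => ?_
      have hs' : s < e + 1 := Finset.mem_range.mp hs
      have := key_choose x s (e + 1) hs'
      calc eulerian (e + 1) s * (x + s).choose (e + 1) * x
          = eulerian (e + 1) s * (x * (x + s).choose (e + 1)) := by ring
        _ = eulerian (e + 1) s * ((s + 1) * (x + s).choose (e + 2) +
              (e + 1 - s) * (x + s + 1).choose (e + 2)) := by rw [this]
        _ = _ := by ring
    rw [step, Finset.sum_add_distrib]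
    rw [Finset.sum_range_succ' (fun s => eulerian (e + 2) s * (x + s).choose (e + 2)) (e + 1)]
    have hrec : ∀ t, eulerian (e + 2) (t + 1) =
        (t + 2) * eulerian (e + 1) (t + 1) + (e + 1 - t) * eulerian (e + 1) t := by
      intro t
      show (t + 2) * eulerian (e + 1) (t + 1) + (e + 2 - (t + 1)) * eulerian (e + 1) t = _
      congr 2
      omega
    have h0 : eulerian (e + 2) 0 = eulerian (e + 1) 0 := rfl
    rw [h0]
    have split1 : ∑ s ∈ Finset.range (e + 1), (s + 1) * eulerian (e + 1) s * (x + s).choose (e + 2)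
        = (∑ t ∈ Finset.range e, (t + 2) * eulerian (e + 1) (t + 1) * (x + (t + 1)).choose (e + 2))
          + eulerian (e + 1) 0 * (x + 0).choose (e + 2) := by
      rw [Finset.sum_range_succ' (fun s => (s + 1) * eulerian (e + 1) s * (x + s).choose (e + 2)) e]
      simp
    rw [split1]
    have split2 : ∑ t ∈ Finset.range (e + 1),
        eulerian (e + 2) (t + 1) * (x + (t + 1)).choose (e + 2)
        = (∑ t ∈ Finset.range e, (t + 2) * eulerian (e + 1) (t + 1) * (x + (t + 1)).choose (e + 2))
          + ∑ t ∈ Finset.range (e + 1), (e + 1 - t) * eulerian (e + 1) t * (x + (t + 1)).choose (e + 2) := by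
      have : ∀ t ∈ Finset.range (e + 1), eulerian (e + 2) (t + 1) * (x + (t + 1)).choose (e + 2)
          = (t + 2) * eulerian (e + 1) (t + 1) * (x + (t + 1)).choose (e + 2)
            + (e + 1 - t) * eulerian (e + 1) t * (x + (t + 1)).choose (e + 2) := by
        intro t ht
        rw [hrec t]; ring
      rw [Finset.sum_congr rfl this, Finset.sum_add_distrib]
      congr 1
      rw [Finset.sum_range_succ]
      have : eulerian (e + 1) (e + 1) = 0 := eulerian_zero_of_le e e le_rfl
      rw [this]
      ring
    rw [split2]
    have : ∀ t ∈ Finset.range (e + 1),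
        (e + 1 - t) * eulerian (e + 1) t * (x + t + 1).choose (e + 2)
        = (e + 1 - t) * eulerian (e + 1) t * (x + (t + 1)).choose (e + 2) := by
      intro t ht; rw [show x + t + 1 = x + (t + 1) by ring]
    rw [Finset.sum_congr rfl this]
    ring

lemma eulerian_symm : ∀ d s : ℕ, s < d → eulerian d s = eulerian d (d - 1 - s) := by
  intro d
  induction d with
  | zero => intro s hs; omega
  | succ e ih =>
    intro s hs
    rcases Nat.eq_zero_or_pos e with rfl | he
    · interval_cases s
      rfl
    obtain ⟨f, rfl⟩ : ∃ f, e = f + 1 := ⟨e - 1, by omega⟩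
    -- goal: eulerian (f+2) s = eulerian (f+2) (f+1-s)
    have hrec : ∀ t, eulerian (f + 2) (t + 1) =
        (t + 2) * eulerian (f + 1) (t + 1) + (f + 1 - t) * eulerian (f + 1) t := by
      intro t
      show (t + 2) * eulerian (f + 1) (t + 1) + (f + 2 - (t + 1)) * eulerian (f + 1) t = _
      congr 2
      omega
    have hend : eulerian (f + 2) 0 = eulerian (f + 2) (f + 1) := by
      have h1 : eulerian (f + 2) (f + 1) = (f + 2) * eulerian (f + 1) (f + 1)
          + 1 * eulerian (f + 1) f := by rw [hrec f]; congr 2; omega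
      rw [h1, eulerian_zero_of_le f f le_rfl]
      have h2 : eulerian (f + 1) f = eulerian (f + 1) 0 := by
        have := ih f (by omega)
        simpa using this
      show eulerian (f + 1) 0 = _
      rw [h2]
      ring
    rcases Nat.eq_zero_or_pos s with rfl | hs0
    · simpa using hend
    obtain ⟨t, rfl⟩ : ∃ t, s = t + 1 := ⟨s - 1, by omega⟩
    rcases Nat.lt_or_ge t f with htf | htf
    · -- t < f, so f + 1 - (t+1) = f - t = u + 1 with u = f - t - 1
      obtain ⟨u, hu⟩ : ∃ u, f - t - 1 = u := ⟨_, rfl⟩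
      have h1 : f + 2 - 1 - (t + 1) = u + 1 := by omega
      rw [h1, hrec t, hrec u]
      have e1 : eulerian (f + 1) u = eulerian (f + 1) (t + 1) := by
        have := ih (t + 1) (by omega)
        simp only [show f + 1 - 1 - (t + 1) = u from by omega] at this
        exact this.symm
      have e2 : eulerian (f + 1) (u + 1) = eulerian (f + 1) t := by
        have := ih t (by omega)
        simp only [show f + 1 - 1 - t = u + 1 from by omega] at this
        exact this.symm
      rw [e1, e2, show u + 2 = f + 1 - t from by omega, show f + 1 - u = t + 2 from by omega]
      ring
    · -- t ≥ f: then t + 1 = f + 1 (since t+1 < f+2), target index 0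
      rw [show f + 2 - 1 - (t + 1) = 0 from by omega, show t + 1 = f + 1 from by omega]
      exact hend.symm

lemma hockey (s d : ℕ) (h : s < d) :
    ∀ m : ℕ, ∑ j ∈ Finset.Icc 1 m, (j + s).choose d = (m + s + 1).choose (d + 1) := by
  intro m
  induction m with
  | zero =>
    simp [Nat.choose_eq_zero_of_lt (by omega : s + 1 < d + 1)]
  | succ k ihk =>
    rw [Finset.sum_Icc_succ_top (by omega : 1 ≤ k + 1), ihk,
      show k + 1 + s = k + s + 1 from by omega, Nat.choose_succ_succ (k + s + 1) d]
    exact Nat.add_comm _ _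

theorem stmt5 (n d : ℕ) (hd : 1 ≤ d) :
    ∑ m ∈ Finset.Icc 1 n, ∑ j ∈ Finset.Icc 1 m, j ^ d =
      ∑ s ∈ Finset.range d, eulerian d s * Nat.choose (n - s + d + 1) (d + 2) := by
  obtain ⟨e, rfl⟩ : ∃ e, d = e + 1 := ⟨d - 1, by omega⟩
  have L1 : ∀ m : ℕ, ∑ j ∈ Finset.Icc 1 m, j ^ (e + 1)
      = ∑ s ∈ Finset.range (e + 1), eulerian (e + 1) s * (m + s + 1).choose (e + 2) := by
    intro m
    calc ∑ j ∈ Finset.Icc 1 m, j ^ (e + 1)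
        = ∑ j ∈ Finset.Icc 1 m, ∑ s ∈ Finset.range (e + 1),
            eulerian (e + 1) s * (j + s).choose (e + 1) :=
          Finset.sum_congr rfl fun j _ => worpitzky e j
      _ = ∑ s ∈ Finset.range (e + 1), ∑ j ∈ Finset.Icc 1 m,
            eulerian (e + 1) s * (j + s).choose (e + 1) := Finset.sum_comm
      _ = ∑ s ∈ Finset.range (e + 1), eulerian (e + 1) s * (m + s + 1).choose (e + 2) := by
          refine Finset.sum_congr rfl fun s hs => ?_
          rw [← Finset.mul_sum, hockey s (e + 1) (Finset.mem_range.mp hs) m]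
  have L2 : ∑ m ∈ Finset.Icc 1 n, ∑ j ∈ Finset.Icc 1 m, j ^ (e + 1)
      = ∑ s ∈ Finset.range (e + 1), eulerian (e + 1) s * (n + s + 2).choose (e + 3) := by
    calc ∑ m ∈ Finset.Icc 1 n, ∑ j ∈ Finset.Icc 1 m, j ^ (e + 1)
        = ∑ m ∈ Finset.Icc 1 n, ∑ s ∈ Finset.range (e + 1),
            eulerian (e + 1) s * (m + s + 1).choose (e + 2) :=
          Finset.sum_congr rfl fun m _ => L1 m
      _ = ∑ s ∈ Finset.range (e + 1), ∑ m ∈ Finset.Icc 1 n,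
            eulerian (e + 1) s * (m + s + 1).choose (e + 2) := Finset.sum_comm
      _ = ∑ s ∈ Finset.range (e + 1), eulerian (e + 1) s * (n + s + 2).choose (e + 3) := by
          refine Finset.sum_congr rfl fun s hs => ?_
          rw [← Finset.mul_sum]
          congr 1
          have h1 : ∀ m : ℕ, m + s + 1 = m + (s + 1) := fun m => by omega
          calc ∑ m ∈ Finset.Icc 1 n, (m + s + 1).choose (e + 2)
              = ∑ m ∈ Finset.Icc 1 n, (m + (s + 1)).choose (e + 2) := by
                refine Finset.sum_congr rfl fun m _ => by rw [h1 m]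
            _ = (n + (s + 1) + 1).choose (e + 2 + 1) := hockey (s + 1) (e + 2) (by
                  have := Finset.mem_range.mp hs; omega) n
            _ = (n + s + 2).choose (e + 3) := by congr 1
  rw [L2, ← Finset.sum_range_reflect
    (fun s => eulerian (e + 1) s * (n + s + 2).choose (e + 3)) (e + 1)]
  refine Finset.sum_congr rfl fun s hs => ?_
  have hs' : s < e + 1 := Finset.mem_range.mp hs
  have hsym : eulerian (e + 1) (e + 1 - 1 - s) = eulerian (e + 1) s :=
    (eulerian_symm (e + 1) s hs').symm
  rw [hsym]
  congr 1
  rcases le_or_gt s n with hle | hlt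
  · congr 1
    omega
  · rw [Nat.choose_eq_zero_of_lt (by omega), Nat.choose_eq_zero_of_lt (by omega)]
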